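/- A partial transformation α of the chain {1, ..., n} is oriented if and only if every restriction of α to a four-element subset of its domain is oriented. -/

import Mathlib

/-- A sequence `a : Fin t → Fin n` is cyclic if at most one index `i`
satisfies `a i > a (i+1)` (indices mod `t`). -/
def IsCyclicSeq {n t : ℕ} (a : Fin t → Fin n) : Prop :=
  (Finset.univ.filter fun i : Fin t =>
    a ⟨(i.val + 1) % t, Nat.mod_lt _ i.pos⟩ < a i).card ≤ 1

/-- A sequence is anti-cyclic if at most one index `i`
satisfies `a i < a (i+1)` (indices mod `t`). -/
def IsAntiCyclicSeq {n t : ℕ} (a : Fin t → Fin n) : Prop :=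
  (Finset.univ.filter fun i : Fin t =>
    a i < a ⟨(i.val + 1) % t, Nat.mod_lt _ i.pos⟩).card ≤ 1

/-- A sequence is oriented if it is cyclic or anti-cyclic. -/
def IsOrientedSeq {n t : ℕ} (a : Fin t → Fin n) : Prop :=
  IsCyclicSeq a ∨ IsAntiCyclicSeq a

/-!
Write `d a` and `d' a` for the numbers of cyclic descents and ascents of a sequence `a`, so that
`a` is oriented iff `d a ≤ 1` or `d' a ≤ 1`. Deleting an entry `a k` replaces the cyclic steps
`a (k - 1) → a k → a (k + 1)` by the single step `a (k - 1) → a (k + 1)`; this never creates a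
descent or an ascent, so `d` and `d'` can only drop on passing to a subsequence.

Conversely, if `d a ≥ 2`, `d' a ≥ 2` and `a` has at least five entries, one entry can be deleted
keeping both counts at least `2`: a repeated entry costs nothing; if both counts are at least `3`
any entry will do; otherwise, with no repetitions and say `d a > d' a`, two consecutive descents
must occur, and deleting the middle of such a descending triple loses one descent and no ascent.
Iterating down to four entries gives a non-oriented restriction.
-/

open Finset OrderDual

theorem Fin.succAbove_add_one {m : ℕ} (k : Fin (m + 2)) (j : Fin (m + 1)) :
    k.succAbove (j + 1) = if k.succAbove j + 1 = k then k + 1 else k.succAbove j + 1 := by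
  have hval (i : Fin (m + 1)) :
      (k.succAbove i : ℕ) = if (i : ℕ) < k then (i : ℕ) else i + 1 := by
    unfold Fin.succAbove; split_ifs <;> simp_all [Fin.lt_def]
  split_ifs with h <;> rw [Fin.ext_iff] at h ⊢ <;>
    simp only [hval, Fin.val_add_one, Fin.ext_iff, Fin.val_last] at h ⊢ <;>
    split_ifs at h ⊢ <;> omega

theorem Fin.exists_strictMono_succAbove_comp {s t : ℕ} {u : Fin s → Fin (t + 1)}
    (hu : StrictMono u) {k : Fin (t + 1)} (hk : ∀ i, u i ≠ k) :
    ∃ v : Fin s → Fin t, StrictMono v ∧ u = k.succAbove ∘ v := by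
  choose v hv using fun i => Fin.exists_succAbove_eq (hk i)
  refine ⟨v, fun i j hij => ?_, funext fun i => (hv i).symm⟩
  rw [← (Fin.strictMono_succAbove k).lt_iff_lt, hv, hv]
  exact hu hij

section CyclicDescents

variable {α : Type*} [LinearOrder α]

def cyclicDescents {t : ℕ} (a : Fin t → α) : ℕ :=
  #{i : Fin t | a ⟨(i.val + 1) % t, Nat.mod_lt _ i.pos⟩ < a i}

/-- The cyclic ascents of `a` are counted as the cyclic descents of `toDual ∘ a`. -/
theorem isOrientedSeq_iff {n t : ℕ} (a : Fin t → Fin n) :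
    IsOrientedSeq a ↔ cyclicDescents a ≤ 1 ∨ cyclicDescents (toDual ∘ a) ≤ 1 :=
  Iff.rfl

theorem cyclicDescents_eq_card {t : ℕ} [NeZero t] (a : Fin t → α) :
    cyclicDescents a = #{i | a (i + 1) < a i} := by
  have hsucc (i : Fin t) : (⟨(i.val + 1) % t, Nat.mod_lt _ i.pos⟩ : Fin t) = i + 1 :=
    Fin.ext (by simp [Fin.val_add])
  simp only [cyclicDescents, hsucc]

theorem cyclicDescents_eq_sum {t : ℕ} [NeZero t] (a : Fin t → α) :
    cyclicDescents a = ∑ i, if a (i + 1) < a i then 1 else 0 := by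
  rw [cyclicDescents_eq_card, card_filter]

theorem cyclicDescents_add_ascents_le {t : ℕ} (a : Fin t → α) :
    cyclicDescents a + cyclicDescents (toDual ∘ a) ≤ t := by
  unfold cyclicDescents
  calc _ ≤ #{i : Fin t | a ⟨(i.val + 1) % t, Nat.mod_lt _ i.pos⟩ < a i}
        + #{i : Fin t | ¬ a ⟨(i.val + 1) % t, Nat.mod_lt _ i.pos⟩ < a i} := by
        gcongr with i
        exact fun h => not_lt_of_gt h
    _ = t := by rw [card_filter_add_card_filter_not, card_univ, Fintype.card_fin]

theorem cyclicDescents_add_ascents_of_ne {t : ℕ} [NeZero t] {a : Fin t → α}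
    (ha : ∀ i, a (i + 1) ≠ a i) :
    cyclicDescents a + cyclicDescents (toDual ∘ a) = t := by
  have hsplit := card_filter_add_card_filter_not (s := univ) fun i : Fin t => a (i + 1) < a i
  rw [card_univ, Fintype.card_fin] at hsplit
  rw [cyclicDescents_eq_card, cyclicDescents_eq_card]
  convert hsplit using 3
  ext i
  simp only [mem_filter, mem_univ, true_and, Function.comp_apply, toDual_lt_toDual, not_lt]
  exact ⟨le_of_lt, fun h => h.lt_of_ne' (ha i)⟩

theorem cyclicDescents_comp_succAbove_add {m : ℕ} (a : Fin (m + 2) → α) (k : Fin (m + 2)) :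
    cyclicDescents (a ∘ k.succAbove) + (if a k < a (k - 1) then 1 else 0)
        + (if a (k + 1) < a k then 1 else 0) =
      cyclicDescents a + (if a (k + 1) < a (k - 1) then 1 else 0) := by
  obtain ⟨j₀, hj₀⟩ : ∃ j₀, k.succAbove j₀ = k - 1 :=
    Fin.exists_succAbove_eq (by simp)
  have hother (j : Fin (m + 1)) (hj : j ≠ j₀) : k.succAbove (j + 1) = k.succAbove j + 1 := by
    rw [Fin.succAbove_add_one, if_neg]
    rintro hk
    exact hj (Fin.succAbove_right_injective (hj₀ ▸ eq_sub_of_add_eq hk))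
  have hj₀' : k.succAbove (j₀ + 1) = k + 1 := by
    rw [Fin.succAbove_add_one, hj₀, sub_add_cancel, if_pos rfl]
  rw [cyclicDescents_eq_sum, cyclicDescents_eq_sum, Fin.sum_univ_succAbove _ k,
    ← add_sum_erase _ _ (mem_univ j₀), ← add_sum_erase _ _ (mem_univ j₀),
    sum_congr rfl fun j hj => by rw [Function.comp_apply, Function.comp_apply,
      hother j (ne_of_mem_erase hj)]]
  simp only [Function.comp_apply, hj₀', hj₀, sub_add_cancel]
  omega

theorem cyclicDescents_comp_succAbove_le {m : ℕ} (a : Fin (m + 1) → α) (k : Fin (m + 1)) :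
    cyclicDescents (a ∘ k.succAbove) ≤ cyclicDescents a := by
  cases m with
  | zero => simp [cyclicDescents]
  | succ m =>
    have h := cyclicDescents_comp_succAbove_add a k
    split_ifs at h <;> first | omega | order

theorem cyclicDescents_le_comp_succAbove_add_one {m : ℕ} (a : Fin (m + 2) → α)
    (k : Fin (m + 2)) : cyclicDescents a ≤ cyclicDescents (a ∘ k.succAbove) + 1 := by
  have h := cyclicDescents_comp_succAbove_add a k
  split_ifs at h <;> first | omega | order

theorem cyclicDescents_le_comp_succAbove {m : ℕ} {a : Fin (m + 2) → α} {k : Fin (m + 2)}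
    (h₁ : a (k - 1) ≤ a k) (h₂ : a k ≤ a (k + 1)) :
    cyclicDescents a ≤ cyclicDescents (a ∘ k.succAbove) := by
  have h := cyclicDescents_comp_succAbove_add a k
  rw [if_neg h₁.not_gt, if_neg h₂.not_gt] at h
  omega

theorem cyclicDescents_comp_succAbove_of_eq {m : ℕ} {a : Fin (m + 2) → α} {k : Fin (m + 2)}
    (h : a (k - 1) = a k) : cyclicDescents (a ∘ k.succAbove) = cyclicDescents a := by
  have h' := cyclicDescents_comp_succAbove_add a k
  rw [h, if_neg (lt_irrefl _)] at h'
  omega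

theorem cyclicDescents_comp_le {s t : ℕ} (a : Fin t → α) {u : Fin s → Fin t}
    (hu : StrictMono u) : cyclicDescents (a ∘ u) ≤ cyclicDescents a := by
  induction t generalizing s with
  | zero =>
    have : IsEmpty (Fin s) := u.isEmpty
    simp [cyclicDescents]
  | succ m ih =>
    by_cases hsurj : Function.Surjective u
    · obtain rfl : s = m + 1 := by
        simpa using Fintype.card_congr (Equiv.ofBijective u ⟨hu.injective, hsurj⟩)
      rw [hu.eq_id, Function.comp_id]
    · obtain ⟨k, hk⟩ := not_forall.mp hsurj
      obtain ⟨v, hv, rfl⟩ := Fin.exists_strictMono_succAbove_comp hu (not_exists.mp hk)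
      exact (ih (a ∘ k.succAbove) hv).trans (cyclicDescents_comp_succAbove_le a k)

theorem exists_consecutive_descents {t : ℕ} [NeZero t] {a : Fin t → α}
    (ha : ∀ i, a (i + 1) ≠ a i) (hlt : cyclicDescents (toDual ∘ a) < cyclicDescents a) :
    ∃ i, a (i + 1) < a i ∧ a (i + 1 + 1) < a (i + 1) := by
  by_contra! h
  refine hlt.not_ge ?_
  rw [cyclicDescents_eq_card, cyclicDescents_eq_card]
  refine card_le_card_of_injOn (· + 1) (fun i hi => ?_) (add_left_injective 1).injOn
  simp only [mem_coe, mem_filter, mem_univ, true_and] at hi ⊢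
  exact (h i hi).lt_of_ne' (ha (i + 1))

theorem exists_succAbove_two_le_of_ne {m : ℕ} {a : Fin (m + 2) → α}
    (ha : ∀ i, a (i + 1) ≠ a i) (hu : 2 ≤ cyclicDescents (toDual ∘ a))
    (hlt : cyclicDescents (toDual ∘ a) < cyclicDescents a) :
    ∃ k : Fin (m + 2), 2 ≤ cyclicDescents (a ∘ k.succAbove) ∧
      2 ≤ cyclicDescents (toDual ∘ a ∘ k.succAbove) := by
  obtain ⟨i, h₁, h₂⟩ := exists_consecutive_descents ha hlt
  refine ⟨i + 1, ?_, ?_⟩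
  · have := cyclicDescents_le_comp_succAbove_add_one a (i + 1)
    omega
  · have hk : a (i + 1) ≤ a (i + 1 - 1) := by rw [add_sub_cancel_right]; exact h₁.le
    exact hu.trans (cyclicDescents_le_comp_succAbove (a := toDual ∘ a) hk h₂.le)

theorem exists_succAbove_two_le {m : ℕ} (hm : 3 ≤ m) (a : Fin (m + 2) → α)
    (hd : 2 ≤ cyclicDescents a) (hu : 2 ≤ cyclicDescents (toDual ∘ a)) :
    ∃ k : Fin (m + 2), 2 ≤ cyclicDescents (a ∘ k.succAbove) ∧
      2 ≤ cyclicDescents (toDual ∘ a ∘ k.succAbove) := by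
  by_cases hrep : ∃ i, a (i + 1) = a i
  · obtain ⟨i, hi⟩ := hrep
    have hk : a (i + 1 - 1) = a (i + 1) := by rw [add_sub_cancel_right, hi]
    refine ⟨i + 1, ?_, ?_⟩
    · rwa [cyclicDescents_comp_succAbove_of_eq hk]
    · rwa [← Function.comp_assoc,
        cyclicDescents_comp_succAbove_of_eq (a := toDual ∘ a) (congrArg toDual hk)]
  simp only [not_exists] at hrep
  have hsum := cyclicDescents_add_ascents_of_ne hrep
  by_cases h3 : 3 ≤ cyclicDescents a ∧ 3 ≤ cyclicDescents (toDual ∘ a)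
  · have hd' := cyclicDescents_le_comp_succAbove_add_one a 0
    have hu' : cyclicDescents (toDual ∘ a) ≤
        cyclicDescents (toDual ∘ a ∘ (0 : Fin (m + 2)).succAbove) + 1 :=
      cyclicDescents_le_comp_succAbove_add_one (toDual ∘ a) 0
    exact ⟨0, by omega, by omega⟩
  rcases (by omega : cyclicDescents (toDual ∘ a) < cyclicDescents a ∨
      cyclicDescents a < cyclicDescents (toDual ∘ a)) with hlt | hlt
  · exact exists_succAbove_two_le_of_ne hrep hu hlt
  · obtain ⟨k, hd', hu'⟩ := exists_succAbove_two_le_of_ne (a := toDual ∘ a)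
      (fun i => toDual.injective.ne (hrep i)) hd hlt
    exact ⟨k, hu', hd'⟩

theorem exists_strictMono_fin_four {t : ℕ} (a : Fin t → α) (hd : 2 ≤ cyclicDescents a)
    (hu : 2 ≤ cyclicDescents (toDual ∘ a)) :
    ∃ u : Fin 4 → Fin t, StrictMono u ∧
      2 ≤ cyclicDescents (a ∘ u) ∧ 2 ≤ cyclicDescents (toDual ∘ a ∘ u) := by
  induction t with
  | zero => simp [cyclicDescents] at hd
  | succ t ih =>
    have hle := cyclicDescents_add_ascents_le a
    rcases Nat.lt_or_ge t 4 with ht | ht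
    · obtain rfl : t = 3 := by omega
      exact ⟨id, strictMono_id, hd, hu⟩
    · obtain ⟨m, rfl⟩ : ∃ m, t = m + 1 := ⟨t - 1, by omega⟩
      obtain ⟨k, hd', hu'⟩ := exists_succAbove_two_le (by omega) a hd hu
      obtain ⟨v, hv, hvd, hvu⟩ := ih (a ∘ k.succAbove) hd' hu'
      exact ⟨k.succAbove ∘ v, (Fin.strictMono_succAbove k).comp hv, hvd, hvu⟩

end CyclicDescents

/-- A partial transformation of {1,…,n}, given by its images f : Fin t → Fin n
listed in increasing order of the domain, is oriented iff every restriction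
to a four-element subset of its domain is oriented. -/
theorem por_iff_restrictions_width_four {n t : ℕ} (f : Fin t → Fin n) :
    IsOrientedSeq f ↔
      ∀ u : Fin 4 → Fin t, StrictMono u → IsOrientedSeq (f ∘ u) := by
  simp only [isOrientedSeq_iff]
  refine ⟨fun h u hu => ?_, fun h => ?_⟩
  · exact h.imp (cyclicDescents_comp_le f hu).trans
      (cyclicDescents_comp_le (toDual ∘ f) hu).trans
  · by_contra! hf
    obtain ⟨u, hu, hd, ha⟩ := exists_strictMono_fin_four f hf.1 hf.2
    have := h u hu
    omega
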